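/- Let S be a left-sided convex point set of n points in general position and let P = d_1,...,d_{n-1} be a path with all labels in {U,D,R}. Define an embedding by processing i = n−1 down to 1: place v_{i+1} on the topmost remaining free point if d_i = U, the bottommost if d_i = D, the rightmost if d_i = R, and finally place v_1 on the last remaining point. Then at every step of this process, the set of already-used points forms a consecutive subset of S along the convex hull. -/

import Mathlib

/-- Edge direction labels. -/
inductive Dir | U | D | L | R
deriving DecidableEq

/-- Opposite label: U↔D, L↔R. -/
def Dir.opp : Dir → Dir
  | .U => .D | .D => .U | .L => .R | .R => .L

/-- Label after counterclockwise rotation by π/2: U↦L, D↦R, R↦U, L↦D. -/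
def Dir.rot : Dir → Dir
  | .U => .L | .D => .R | .R => .U | .L => .D

/-- Label after vertical-line reflection: U↦U, D↦D, R↦L, L↦R. -/
def Dir.mir : Dir → Dir
  | .U => .U | .D => .D | .R => .L | .L => .R

/-- An edge from `a` to `b` is consistent with a direction label. -/
def dirOk : Dir → ℝ × ℝ → ℝ × ℝ → Prop
  | .U, a, b => a.2 < b.2
  | .D, a, b => b.2 < a.2
  | .R, a, b => a.1 < b.1
  | .L, a, b => b.1 < a.1

/-- The drawing of a path with edge labels `d` and vertex placement `E` is
direction-consistent. -/
def DirConsistent {m : ℕ} (d : Fin m → Dir) (E : Fin (m + 1) → ℝ × ℝ) : Prop :=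
  ∀ i : Fin m, dirOk (d i) (E i.castSucc) (E i.succ)

/-- The straight-line drawing of the path with vertex placement `E` is planar:
non-adjacent segments are disjoint; adjacent segments meet only at the shared endpoint. -/
def PlanarDrawing {m : ℕ} (E : Fin (m + 1) → ℝ × ℝ) : Prop :=
  (∀ i j : Fin m, (i : ℕ) + 1 < (j : ℕ) →
    segment ℝ (E i.castSucc) (E i.succ) ∩ segment ℝ (E j.castSucc) (E j.succ) = ∅) ∧
  (∀ i j : Fin m, (i : ℕ) + 1 = (j : ℕ) →
    segment ℝ (E i.castSucc) (E i.succ) ∩ segment ℝ (E j.castSucc) (E j.succ) = {E i.succ})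

/-- `E` is an embedding of the path vertices onto the point set `S`. -/
def EmbOn {m : ℕ} (E : Fin (m + 1) → ℝ × ℝ) (S : Set (ℝ × ℝ)) : Prop :=
  Function.Injective E ∧ Set.range E = S

/-- Planar direction-consistent embedding of the labeled path `d` on `S`. -/
def PDCE {m : ℕ} (d : Fin m → Dir) (E : Fin (m + 1) → ℝ × ℝ) (S : Set (ℝ × ℝ)) : Prop :=
  EmbOn E S ∧ DirConsistent d E ∧ PlanarDrawing E

/-- `S` is in convex position. -/
def ConvexPos (S : Set (ℝ × ℝ)) : Prop :=
  ConvexIndependent ℝ ((↑) : S → ℝ × ℝ)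

/-- No three distinct points of `S` are collinear. -/
def NoThreeCollinear (S : Set (ℝ × ℝ)) : Prop :=
  ∀ p ∈ S, ∀ q ∈ S, ∀ r ∈ S, p ≠ q → p ≠ r → q ≠ r →
    ¬ Collinear ℝ ({p, q, r} : Set (ℝ × ℝ))

/-- General position: no three collinear, no two points with equal x- or y-coordinate. -/
def GenPos (S : Set (ℝ × ℝ)) : Prop :=
  NoThreeCollinear S ∧ ∀ p ∈ S, ∀ q ∈ S, p ≠ q → p.1 ≠ q.1 ∧ p.2 ≠ q.2

def IsTopmost (S : Set (ℝ × ℝ)) (t : ℝ × ℝ) : Prop :=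
  t ∈ S ∧ ∀ p ∈ S, p ≠ t → p.2 < t.2
def IsBottommost (S : Set (ℝ × ℝ)) (b : ℝ × ℝ) : Prop :=
  b ∈ S ∧ ∀ p ∈ S, p ≠ b → b.2 < p.2
def IsLeftmost (S : Set (ℝ × ℝ)) (l : ℝ × ℝ) : Prop :=
  l ∈ S ∧ ∀ p ∈ S, p ≠ l → l.1 < p.1
def IsRightmost (S : Set (ℝ × ℝ)) (r : ℝ × ℝ) : Prop :=
  r ∈ S ∧ ∀ p ∈ S, p ≠ r → p.1 < r.1

/-- Cross product telling on which side of the directed line `a → b` the point `p` lies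
(`0 < cross a b p` means `p` is strictly to the left). -/
def cross (a b p : ℝ × ℝ) : ℝ :=
  (b.1 - a.1) * (p.2 - a.2) - (b.2 - a.2) * (p.1 - a.1)

/-- With `b` bottommost and `t` topmost, all other points lie strictly to the left of the
line through `b` and `t`. -/
def LeftSided (S : Set (ℝ × ℝ)) (b t : ℝ × ℝ) : Prop :=
  IsBottommost S b ∧ IsTopmost S t ∧ ∀ p ∈ S, p ≠ b → p ≠ t → 0 < cross b t p

/-- With `b` bottommost and `t` topmost, all other points lie strictly to the right of the
line through `b` and `t`. -/
def RightSided (S : Set (ℝ × ℝ)) (b t : ℝ × ℝ) : Prop :=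
  IsBottommost S b ∧ IsTopmost S t ∧ ∀ p ∈ S, p ≠ b → p ≠ t → cross b t p < 0

/-- Two points of `S` are consecutive on the convex hull of `S`: all other points of `S`
lie strictly on one side of the line through them. -/
def HullConsecutive (S : Set (ℝ × ℝ)) (p q : ℝ × ℝ) : Prop :=
  p ∈ S ∧ q ∈ S ∧ p ≠ q ∧
    ((∀ r ∈ S, r ≠ p → r ≠ q → 0 < cross p q r) ∨
     (∀ r ∈ S, r ≠ p → r ≠ q → cross p q r < 0))

/-- Strip-convex point set with bottommost `b`, leftmost `l`, topmost `t`, rightmost `r`: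
`b` and `l` coincide or are hull-consecutive, and so do `t` and `r`. -/
def StripConvex (S : Set (ℝ × ℝ)) (b l t r : ℝ × ℝ) : Prop :=
  IsBottommost S b ∧ IsLeftmost S l ∧ IsTopmost S t ∧ IsRightmost S r ∧
    (b = l ∨ HullConsecutive S b l) ∧ (t = r ∨ HullConsecutive S t r)

/-- `T` is a consecutive subset of the convex point set `S` along its hull:
it can be separated from `S \ T` by a line. -/
def Consecutive (S T : Set (ℝ × ℝ)) : Prop :=
  T ⊆ S ∧ ∃ f : (ℝ × ℝ) →ₗ[ℝ] ℝ, ∃ c : ℝ,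
    (∀ p ∈ T, c < f p) ∧ ∀ p ∈ S \ T, f p < c

/-!
Since `S` is convex and left-sided, a point lying between two others in height lies strictly to
the left of the chord joining them; in particular the rightmost point of any subset of `S` is its
topmost or bottommost point. So every removal takes the highest or the lowest remaining point,
and the remaining points always form a horizontal slab of `S`. The removed points are those below
and those above the slab, and the line through the highest point below and the lowest point above
separates them from it.
-/

open Set

lemma IsBottommost.snd_le {S : Set (ℝ × ℝ)} {b p : ℝ × ℝ} (hb : IsBottommost S b) (hp : p ∈ S) :
    b.2 ≤ p.2 := by
  rcases eq_or_ne p b with rfl | hpb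
  exacts [le_rfl, (hb.2 p hp hpb).le]

lemma IsTopmost.le_snd {S : Set (ℝ × ℝ)} {t p : ℝ × ℝ} (ht : IsTopmost S t) (hp : p ∈ S) :
    p.2 ≤ t.2 := by
  rcases eq_or_ne p t with rfl | hpt
  exacts [le_rfl, (ht.2 p hp hpt).le]

lemma exists_mem_segment_snd_eq {a c q : ℝ × ℝ} (hac : a.2 < c.2) (haq : a.2 ≤ q.2)
    (hqc : q.2 ≤ c.2) :
    ∃ w ∈ segment ℝ a c, w.2 = q.2 ∧ (w.1 - q.1) * (c.2 - a.2) = cross a c q := by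
  have hpos : 0 < c.2 - a.2 := sub_pos.2 hac
  set s := (q.2 - a.2) / (c.2 - a.2)
  have hs : s * (c.2 - a.2) = q.2 - a.2 := div_mul_cancel₀ _ hpos.ne'
  refine ⟨(1 - s) • a + s • c, ⟨1 - s, s, ?_, ?_, by ring, rfl⟩, ?_, ?_⟩
  · rw [sub_nonneg, div_le_one hpos]
    linarith
  · exact div_nonneg (sub_nonneg.2 haq) hpos.le
  · simp only [Prod.snd_add, Prod.smul_snd, smul_eq_mul]
    linear_combination hs
  · simp only [Prod.fst_add, Prod.smul_fst, smul_eq_mul, cross]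
    linear_combination (c.1 - a.1) * hs

lemma mem_segment_of_snd_eq {w m q : ℝ × ℝ} (hw : w.2 = q.2) (hm : m.2 = q.2) (hwq : w.1 ≤ q.1)
    (hqm : q.1 ≤ m.1) : q ∈ segment ℝ w m := by
  rw [show w = (w.1, q.2) from Prod.ext rfl hw, show m = (m.1, q.2) from Prod.ext rfl hm,
    ← Prod.image_mk_segment_left, segment_eq_Icc (hwq.trans hqm)]
  exact ⟨q.1, ⟨hwq, hqm⟩, rfl⟩

lemma consecutive_of_forall_lt {S T : Set (ℝ × ℝ)} (hfin : S.Finite) (hT : T ⊆ S)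
    (f : (ℝ × ℝ) →ₗ[ℝ] ℝ) (hf : ∀ q ∈ S \ T, ∀ p ∈ T, f q < f p) : Consecutive S T := by
  obtain ⟨c, hlt, hgt⟩ := (hfin.sdiff.image f).exists_between' ((hfin.subset hT).image f)
    (by simpa only [forall_mem_image] using hf)
  exact ⟨hT, f, c, fun p hp ↦ hgt _ (mem_image_of_mem f hp),
    fun q hq ↦ hlt _ (mem_image_of_mem f hq)⟩

def IsSlab (S R : Set (ℝ × ℝ)) : Prop :=
  ∀ p ∈ R, ∀ q ∈ R, ∀ x ∈ S, p.2 ≤ x.2 → x.2 ≤ q.2 → x ∈ R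

lemma isSlab_sdiff_image_Iic {ι : Type*} [Preorder ι] {S : Set (ℝ × ℝ)} (seq : ι → ℝ × ℝ)
    (hext : ∀ k, IsTopmost (S \ seq '' Iio k) (seq k) ∨ IsBottommost (S \ seq '' Iio k) (seq k))
    (k : ι) : IsSlab S (S \ seq '' Iic k) := by
  rintro p hp q hq x hx hpx hxq
  refine ⟨hx, ?_⟩
  rintro ⟨j, hjk, rfl⟩
  have hsub : S \ seq '' Iic k ⊆ S \ seq '' Iio j :=
    sdiff_subset_sdiff_right (image_mono fun i hij ↦ (le_of_lt hij).trans hjk)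
  rcases hext j with htop | hbot
  · exact (htop.2 q (hsub hq) fun h ↦ hq.2 ⟨j, hjk, h.symm⟩).not_ge hxq
  · exact (hbot.2 p (hsub hp) fun h ↦ hp.2 ⟨j, hjk, h.symm⟩).not_ge hpx

namespace LeftSided

variable {S : Set (ℝ × ℝ)} {b t : ℝ × ℝ}

/-- If `q` were not left of the chord `pr`, it would lie on the horizontal segment joining that
chord to the chord `bt`, hence in the convex hull of the other points. -/
theorem cross_pos (hside : LeftSided S b t) (hconv : ConvexPos S) {p q r : ℝ × ℝ} (hp : p ∈ S)
    (hq : q ∈ S) (hr : r ∈ S) (hpq : p.2 < q.2) (hqr : q.2 < r.2) : 0 < cross p r q := by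
  obtain ⟨hb, ht, hleft⟩ := hside
  by_contra! hcr
  have hbq : b.2 < q.2 := (hb.snd_le hp).trans_lt hpq
  have hqt : q.2 < t.2 := hqr.trans_le (ht.le_snd hr)
  have hcq : 0 < cross b t q := hleft q hq (fun h ↦ hbq.ne' (congrArg Prod.snd h))
    (fun h ↦ hqt.ne (congrArg Prod.snd h))
  obtain ⟨m, hm, hm2, hm1⟩ := exists_mem_segment_snd_eq (hbq.trans hqt) hbq.le hqt.le
  obtain ⟨w, hw, hw2, hw1⟩ := exists_mem_segment_snd_eq (hpq.trans hqr) hpq.le hqr.le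
  have hqm : q.1 ≤ m.1 := by nlinarith
  have hwq : w.1 ≤ q.1 := by nlinarith
  have hother : ∀ x ∈ S, x.2 ≠ q.2 → x ∈ S \ {q} := fun x hx hxq ↦
    ⟨hx, fun h ↦ hxq (congrArg Prod.snd h)⟩
  have hhull := convex_convexHull ℝ (S \ {q})
  refine convexIndependent_set_iff_notMem_convexHull_sdiff.1 hconv q hq
    (hhull.segment_subset ?_ ?_ (mem_segment_of_snd_eq hw2 hm2 hwq hqm))
  · exact segment_subset_convexHull (hother p hp hpq.ne) (hother r hr hqr.ne') hw
  · exact segment_subset_convexHull (hother b hb.1 hbq.ne) (hother t ht.1 hqt.ne') hm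

theorem cross_pos_iff (hside : LeftSided S b t) (hconv : ConvexPos S) (hy : S.InjOn Prod.snd)
    {a c x : ℝ × ℝ} (ha : a ∈ S) (hc : c ∈ S) (hx : x ∈ S) (hac : a.2 < c.2) :
    0 < cross a c x ↔ a.2 < x.2 ∧ x.2 < c.2 := by
  refine ⟨fun hpos ↦ ?_, fun h ↦ hside.cross_pos hconv ha hx hc h.1 h.2⟩
  by_contra! hout
  rcases le_or_gt x.2 a.2 with hxa | hax
  · rcases eq_or_ne x a with rfl | hne
    · linarith [show cross x c x = 0 by unfold cross; ring]
    · have := hside.cross_pos hconv hx ha hc (hxa.lt_of_ne (hy.ne hx ha hne)) hac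
      linarith [show cross x c a = -cross a c x by unfold cross; ring]
  · rcases eq_or_ne x c with rfl | hne
    · linarith [show cross a x x = 0 by unfold cross; ring]
    · have := hside.cross_pos hconv ha hc hx hac ((hout hax).lt_of_ne (hy.ne hc hx hne.symm))
      linarith [show cross a x c = -cross a c x by unfold cross; ring]

theorem isTopmost_or_isBottommost_of_isRightmost (hside : LeftSided S b t) (hconv : ConvexPos S)
    (hy : S.InjOn Prod.snd) {R : Set (ℝ × ℝ)} (hR : R ⊆ S) {z : ℝ × ℝ} (hz : IsRightmost R z) :
    IsTopmost R z ∨ IsBottommost R z := by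
  by_contra! h
  simp only [IsTopmost, IsBottommost, hz.1, true_and, not_forall, not_lt, exists_prop] at h
  obtain ⟨⟨p, hp, hpz_ne, hzp_le⟩, ⟨q, hq, hqz_ne, hqz_le⟩⟩ := h
  have hzp : z.2 < p.2 := hzp_le.lt_of_ne (hy.ne (hR hz.1) (hR hp) (Ne.symm hpz_ne))
  have hqz : q.2 < z.2 := hqz_le.lt_of_ne (hy.ne (hR hq) (hR hz.1) hqz_ne)
  have hcross := hside.cross_pos hconv (hR hq) (hR hz.1) (hR hp) hqz hzp
  have hpx := hz.2 p hp hpz_ne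
  have hqx := hz.2 q hq hqz_ne
  unfold cross at hcross
  nlinarith [mul_pos (sub_pos.2 hzp) (sub_pos.2 hqx), mul_pos (sub_pos.2 hqz) (sub_pos.2 hpx)]

theorem consecutive_of_isSlab (hside : LeftSided S b t) (hconv : ConvexPos S) (hfin : S.Finite)
    (hy : S.InjOn Prod.snd) {T : Set (ℝ × ℝ)} (hT : T ⊆ S) (hslab : IsSlab S (S \ T)) :
    Consecutive S T := by
  set below := {p ∈ T | ∀ q ∈ S \ T, p.2 < q.2}
  set above := {p ∈ T | ∀ q ∈ S \ T, q.2 < p.2}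
  have hsplit : ∀ p ∈ T, p ∈ below ∨ p ∈ above := by
    intro p hp
    by_contra! h
    simp only [below, above, mem_ofPred_eq, hp, true_and, not_forall, not_lt, exists_prop] at h
    obtain ⟨⟨q, hq, hqp⟩, ⟨q', hq', hpq'⟩⟩ := h
    exact (hslab q hq q' hq' p (hT hp) hqp hpq').2 hp
  rcases below.eq_empty_or_nonempty with hlo | hlo
  · refine consecutive_of_forall_lt hfin hT (LinearMap.snd ℝ ℝ ℝ) fun q hq p hp ↦ ?_
    exact ((hsplit p hp).resolve_left (hlo ▸ notMem_empty p)).2 q hq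
  rcases above.eq_empty_or_nonempty with hhi | hhi
  · refine consecutive_of_forall_lt hfin hT (-LinearMap.snd ℝ ℝ ℝ) fun q hq p hp ↦ ?_
    simpa using ((hsplit p hp).resolve_right (hhi ▸ notMem_empty p)).2 q hq
  obtain ⟨P, hP, hPmax⟩ := exists_max_image below Prod.snd (hfin.subset fun x hx ↦ hT hx.1) hlo
  obtain ⟨Q, hQ, hQmin⟩ := exists_min_image above Prod.snd (hfin.subset fun x hx ↦ hT hx.1) hhi
  refine consecutive_of_forall_lt hfin hT
    ((Q.2 - P.2) • LinearMap.fst ℝ ℝ ℝ - (Q.1 - P.1) • LinearMap.snd ℝ ℝ ℝ) fun q hq p hp ↦ ?_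
  have hPQ : P.2 < Q.2 := (hP.2 q hq).trans (hQ.2 q hq)
  have hcross_q : 0 < cross P Q q :=
    hside.cross_pos hconv (hT hP.1) hq.1 (hT hQ.1) (hP.2 q hq) (hQ.2 q hq)
  have hcross_p : cross P Q p ≤ 0 := by
    refine not_lt.1 fun hpos ↦ ?_
    obtain ⟨hPp, hpQ⟩ := (hside.cross_pos_iff hconv hy (hT hP.1) (hT hQ.1) (hT hp) hPQ).1 hpos
    rcases hsplit p hp with hlow | hhigh
    · exact (hPmax p hlow).not_gt hPp
    · exact (hQmin p hhigh).not_gt hpQ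
  simp only [LinearMap.sub_apply, LinearMap.smul_apply, LinearMap.fst_apply, LinearMap.snd_apply,
    smul_eq_mul]
  unfold cross at hcross_q hcross_p
  linarith

end LeftSided

theorem leftSided_removal_consecutive_general {n : ℕ} (S : Set (ℝ × ℝ)) (hfin : S.Finite)
    (hconv : ConvexPos S) (hgen : GenPos S)
    (b t : ℝ × ℝ) (hside : LeftSided S b t)
    (seq : Fin (n + 1) → ℝ × ℝ)
    (hseq : ∀ k : Fin (n + 1),
      IsTopmost (S \ (seq '' {j | j < k})) (seq k) ∨
      IsBottommost (S \ (seq '' {j | j < k})) (seq k) ∨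
      IsRightmost (S \ (seq '' {j | j < k})) (seq k)) :
    ∀ k : Fin (n + 1), Consecutive S (seq '' {j | j ≤ k}) := by
  have hy : S.InjOn Prod.snd := fun p hp q hq h ↦ by_contra fun hpq ↦ (hgen.2 p hp q hq hpq).2 h
  have hext : ∀ k, IsTopmost (S \ seq '' Iio k) (seq k) ∨ IsBottommost (S \ seq '' Iio k) (seq k) :=
    fun k ↦ (hseq k).elim Or.inl fun h ↦ h.elim Or.inr fun hr ↦
      hside.isTopmost_or_isBottommost_of_isRightmost hconv hy sdiff_subset hr
  intro k
  have hT : seq '' Iic k ⊆ S := by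
    rintro _ ⟨j, -, rfl⟩
    rcases hext j with h | h
    exacts [h.1.1, h.1.1]
  exact hside.consecutive_of_isSlab hconv hfin hy hT (isSlab_sdiff_image_Iic seq hext k)

/-- in a left-sided convex point set, removing at each step the topmost,
bottommost, or rightmost of the remaining points always leaves the set of removed
points consecutive along the convex hull. -/
theorem leftSided_removal_consecutive {n : ℕ} (S : Set (ℝ × ℝ)) (hfin : S.Finite)
    (hcard : S.ncard = n + 1) (hconv : ConvexPos S) (hgen : GenPos S)
    (b t : ℝ × ℝ) (hside : LeftSided S b t)
    (seq : Fin (n + 1) → ℝ × ℝ)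
    (hseq : ∀ k : Fin (n + 1),
      IsTopmost (S \ (seq '' {j | j < k})) (seq k) ∨
      IsBottommost (S \ (seq '' {j | j < k})) (seq k) ∨
      IsRightmost (S \ (seq '' {j | j < k})) (seq k)) :
    ∀ k : Fin (n + 1), Consecutive S (seq '' {j | j ≤ k}) :=
  leftSided_removal_consecutive_general S hfin hconv hgen b t hside seq hseq
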